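/- Let π be a finitely generated abelian group. Then there is an injective group homomorphism from the second group cohomology H²(π, ℚ/ℤ) (trivial action) into Hom(π ⊗_ℤ π, ℚ/ℤ). -/

import Mathlib

/-!
For a 2-cocycle `f` of an abelian group `π` with trivial coefficients in `A`, the commutator
pairing `(x, y) ↦ f(x, y) - f(y, x)` of the central extension classified by `f` is bilinear and
vanishes on coboundaries, so it induces `H²(π, A) → Hom(π ⊗ π, A)`. If the pairing of `f`
vanishes, `f` is symmetric and the extension is abelian; when `A` is divisible (an injective
`ℤ`-module) this extension splits, which makes `f` a coboundary.
-/

open TensorProduct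

structure NormalizedSymmCocycle (P A : Type*) [AddCommGroup P] [AddCommGroup A] where
  toFun : P → P → A
  symm : ∀ x y, toFun x y = toFun y x
  cocycle : ∀ x y z, toFun y z + toFun x (y + z) = toFun (x + y) z + toFun x y
  zero_left : ∀ x, toFun 0 x = 0

namespace NormalizedSymmCocycle

variable {P A : Type*} [AddCommGroup P] [AddCommGroup A]

instance : CoeFun (NormalizedSymmCocycle P A) fun _ ↦ P → P → A := ⟨toFun⟩

variable (c : NormalizedSymmCocycle P A)

lemma zero_right (x : P) : c x 0 = 0 := (c.symm x 0).trans (c.zero_left x)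

@[ext]
structure Extension (c : NormalizedSymmCocycle P A) where
  fst : A
  snd : P

instance : Zero c.Extension := ⟨⟨0, 0⟩⟩

instance : Add c.Extension := ⟨fun u v ↦ ⟨u.fst + v.fst + c u.snd v.snd, u.snd + v.snd⟩⟩

instance : Neg c.Extension := ⟨fun u ↦ ⟨-u.fst - c u.snd (-u.snd), -u.snd⟩⟩

@[simp] lemma zero_fst : (0 : c.Extension).fst = 0 := rfl
@[simp] lemma zero_snd : (0 : c.Extension).snd = 0 := rfl
@[simp] lemma add_fst (u v : c.Extension) : (u + v).fst = u.fst + v.fst + c u.snd v.snd := rfl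
@[simp] lemma add_snd (u v : c.Extension) : (u + v).snd = u.snd + v.snd := rfl
@[simp] lemma neg_fst (u : c.Extension) : (-u).fst = -u.fst - c u.snd (-u.snd) := rfl
@[simp] lemma neg_snd (u : c.Extension) : (-u).snd = -u.snd := rfl

instance : AddCommGroup c.Extension where
  nsmul := nsmulRec
  zsmul := zsmulRec
  add_assoc u v w := by
    ext
    · rw [add_fst, add_fst, add_fst, add_fst, add_snd, add_snd,
        eq_sub_of_add_eq (c.cocycle u.snd v.snd w.snd).symm]
      abel
    · exact add_assoc _ _ _
  zero_add u := by ext <;> simp [c.zero_left]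
  add_zero u := by ext <;> simp [c.zero_right]
  neg_add_cancel u := by
    ext
    · simp only [add_fst, neg_fst, neg_snd, zero_fst, c.symm (-u.snd)]
      abel
    · simp
  add_comm u v := by
    ext
    · simp only [add_fst, c.symm u.snd, add_comm u.fst]
    · exact add_comm _ _

lemma mk_add_mk (a b : A) (x y : P) :
    (⟨a, x⟩ + ⟨b, y⟩ : c.Extension) = ⟨a + b + c x y, x + y⟩ := rfl

def inl : A →+ c.Extension :=
  AddMonoidHom.mk' (fun a ↦ ⟨a, 0⟩) fun a b ↦ by rw [mk_add_mk, c.zero_left, add_zero, add_zero]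

lemma inl_injective : Function.Injective c.inl := fun _ _ h ↦ congrArg Extension.fst h

/-- `A` is injective, so `inl` has a retraction `r`, and `c` is the coboundary of `x ↦ r ⟨0, x⟩`. -/
theorem exists_eq_add_sub [Module.Injective ℤ A] :
    ∃ b : P → A, ∀ x y, c x y = b x + b y - b (x + y) := by
  obtain ⟨r, hr⟩ := (Module.Baer.of_injective ‹Module.Injective ℤ A›).extension_property_addMonoidHom
    c.inl c.inl_injective (AddMonoidHom.id A)
  refine ⟨fun x ↦ r ⟨0, x⟩, fun x y ↦ ?_⟩
  have hsplit : (⟨0, x⟩ + ⟨0, y⟩ : c.Extension) = c.inl (c x y) + ⟨0, x + y⟩ := by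
    simp only [inl, AddMonoidHom.mk'_apply, mk_add_mk, c.zero_left, zero_add, add_zero]
  have hr_split := congrArg r hsplit
  rw [map_add, map_add, ← AddMonoidHom.comp_apply r, hr, AddMonoidHom.id_apply] at hr_split
  rw [hr_split, add_sub_cancel_right]

end NormalizedSymmCocycle

theorem exists_eq_add_sub_of_symm_of_cocycle {P A : Type*} [AddCommGroup P] [AddCommGroup A]
    [Module.Injective ℤ A] (c : P → P → A) (hsymm : ∀ x y, c x y = c y x)
    (hcocycle : ∀ x y z, c y z + c x (y + z) = c (x + y) z + c x y) :
    ∃ b : P → A, ∀ x y, c x y = b x + b y - b (x + y) := by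
  have hzero_left : ∀ x, c 0 x = c 0 0 := fun x ↦ by
    simpa [add_comm] using hcocycle 0 0 x
  let c₀ : NormalizedSymmCocycle P A :=
    { toFun x y := c x y - c 0 0
      symm x y := by rw [hsymm]
      cocycle x y z := by rw [sub_add_sub_comm, sub_add_sub_comm, hcocycle]
      zero_left x := by rw [hzero_left, sub_self] }
  obtain ⟨b, hb⟩ := c₀.exists_eq_add_sub
  refine ⟨fun x ↦ b x + c 0 0, fun x y ↦ ?_⟩
  have hbxy : c x y - c 0 0 = b x + b y - b (x + y) := hb x y
  linear_combination (norm := module) hbxy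

lemma LinearMap.exists_injective_comp_eq_of_ker_eq {R M N Q : Type*} [Ring R]
    [AddCommGroup M] [AddCommGroup N] [AddCommGroup Q] [Module R M] [Module R N] [Module R Q]
    (f : M →ₗ[R] N) (hf : Function.Surjective f) (g : M →ₗ[R] Q) (h : ker f = ker g) :
    ∃ ψ : N →ₗ[R] Q, Function.Injective ψ ∧ ψ ∘ₗ f = g := by
  refine ⟨(ker f).liftQ g h.le ∘ₗ (f.quotKerEquivOfSurjective hf).symm.toLinearMap, ?_, ?_⟩
  · exact (ker_eq_bot.mp (Submodule.ker_liftQ_eq_bot _ _ h.le h.ge)).comp (LinearEquiv.injective _)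
  · ext x
    simp

namespace groupCohomology

open Multiplicative

section

variable {k G A : Type} [CommRing k] [Group G] [AddCommGroup A] [Module k A]

theorem mem_cocycles₂_trivial_iff (f : G × G → A) :
    f ∈ cocycles₂ (Rep.trivial k G A) ↔
      ∀ g h j : G, f (h, j) + f (g, h * j) = f (g * h, j) + f (g, h) := by
  simp [mem_cocycles₂_iff, eq_comm]

theorem mem_coboundaries₂_trivial_iff (f : G × G → A) :
    f ∈ coboundaries₂ (Rep.trivial k G A) ↔
      ∃ x : G → A, ∀ g h : G, f (g, h) = x g + x h - x (g * h) := by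
  simp only [coboundaries₂, LinearMap.mem_range, funext_iff, Prod.forall, d₁₂_hom_apply,
    Representation.trivial_apply]
  refine exists_congr fun x ↦ forall₂_congr fun g h ↦ ?_
  rw [eq_comm, sub_add_eq_add_sub, add_comm (x h)]

end

variable {π A : Type} [AddCommGroup π] [AddCommGroup A]

def commPairing (f : cocycles₂ (Rep.trivial ℤ (Multiplicative π) A)) (x y : π) : A :=
  f (ofAdd x, ofAdd y) - f (ofAdd y, ofAdd x)

section

variable (f : cocycles₂ (Rep.trivial ℤ (Multiplicative π) A))

lemma commPairing_add_left (x x' y : π) :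
    commPairing f (x + x') y = commPairing f x y + commPairing f x' y := by
  have hf := (mem_cocycles₂_trivial_iff (f : _ → A)).mp f.2
  have e₁ := hf (ofAdd x) (ofAdd x') (ofAdd y)
  have e₂ := hf (ofAdd y) (ofAdd x) (ofAdd x')
  have e₃ := hf (ofAdd x) (ofAdd y) (ofAdd x')
  rw [mul_comm (ofAdd y) (ofAdd x)] at e₂
  rw [mul_comm (ofAdd y) (ofAdd x')] at e₃
  simp only [commPairing, ofAdd_add]
  linear_combination (norm := module) e₃ - e₁ - e₂

lemma commPairing_swap (x y : π) : commPairing f y x = -commPairing f x y :=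
  (neg_sub _ _).symm

lemma commPairing_add_right (x y y' : π) :
    commPairing f x (y + y') = commPairing f x y + commPairing f x y' := by
  rw [← neg_neg (commPairing f x _), ← commPairing_swap, commPairing_add_left, neg_add,
    ← commPairing_swap, ← commPairing_swap]

end

variable (π A) in
def commPairingₗ : cocycles₂ (Rep.trivial ℤ (Multiplicative π) A) →ₗ[ℤ] π →ₗ[ℤ] π →ₗ[ℤ] A where
  toFun f := AddMonoidHom.toIntLinearMap <|
    AddMonoidHom.mk'
      (fun x ↦ (AddMonoidHom.mk' (commPairing f x) (commPairing_add_right f x)).toIntLinearMap)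
      fun x x' ↦ LinearMap.ext (commPairing_add_left f x x')
  map_add' f f' := by
    ext x y
    exact add_sub_add_comm _ _ _ _
  map_smul' n f := by
    ext x y
    exact (smul_sub n _ _).symm

@[simp]
lemma commPairingₗ_apply (f : cocycles₂ (Rep.trivial ℤ (Multiplicative π) A)) (x y : π) :
    commPairingₗ π A f x y = commPairing f x y := rfl

theorem commPairingₗ_eq_zero_iff [Module.Injective ℤ A]
    (f : cocycles₂ (Rep.trivial ℤ (Multiplicative π) A)) :
    commPairingₗ π A f = 0 ↔ ⇑f ∈ coboundaries₂ (Rep.trivial ℤ (Multiplicative π) A) := by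
  constructor
  · intro h
    have hsymm (x y : π) : f (ofAdd x, ofAdd y) = f (ofAdd y, ofAdd x) :=
      sub_eq_zero.mp (LinearMap.congr_fun₂ h x y)
    obtain ⟨b, hb⟩ := exists_eq_add_sub_of_symm_of_cocycle (fun x y : π ↦ f (ofAdd x, ofAdd y))
      hsymm fun x y z ↦ (mem_cocycles₂_trivial_iff (f : _ → A)).mp f.2 _ _ _
    exact (mem_coboundaries₂_trivial_iff _).mpr ⟨fun g ↦ b g.toAdd, fun g h ↦ hb g.toAdd h.toAdd⟩
  · intro hf
    obtain ⟨b, hb⟩ := (mem_coboundaries₂_trivial_iff _).mp hf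
    ext x y
    simp only [commPairingₗ_apply, commPairing, hb, mul_comm (ofAdd y), LinearMap.zero_apply]
    abel

theorem exists_injective_H2_trivial [Module.Injective ℤ A] :
    ∃ φ : H2 (Rep.trivial ℤ (Multiplicative π) A) →ₗ[ℤ] π →ₗ[ℤ] π →ₗ[ℤ] A,
      Function.Injective φ ∧ φ ∘ₗ (H2π _).hom = commPairingₗ π A :=
  LinearMap.exists_injective_comp_eq_of_ker_eq _ ((ModuleCat.epi_iff_surjective _).mp inferInstance)
    _ (by ext f; exact (H2π_eq_zero_iff f).trans (commPairingₗ_eq_zero_iff f).symm)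

end groupCohomology

theorem stmt5_general (π : Type) [AddCommGroup π] :
    ∃ f : groupCohomology.H2 (Rep.trivial ℤ (Multiplicative π) (AddCircle (1 : ℚ))) →+
      ((π ⊗[ℤ] π) →+ AddCircle (1 : ℚ)), Function.Injective f := by
  have : Module.Injective ℤ (AddCircle (1 : ℚ)) := (Module.Baer.of_divisible _).injective
  obtain ⟨φ, hφ, -⟩ := groupCohomology.exists_injective_H2_trivial (π := π) (A := AddCircle (1 : ℚ))
  let e := TensorProduct.lift.equiv (RingHom.id ℤ) π π (AddCircle (1 : ℚ)) ≪≫ₗ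
    (addMonoidHomLequivInt ℤ).symm
  exact ⟨(e.toLinearMap ∘ₗ φ).toAddMonoidHom, e.injective.comp hφ⟩

/-- For a finitely generated abelian group `π`, there is an injective group
homomorphism `H²(π, ℚ/ℤ) → Hom(π ⊗_ℤ π, ℚ/ℤ)` (trivial action on `ℚ/ℤ`). -/
theorem stmt5 (π : Type) [AddCommGroup π] (hfg : AddGroup.FG π) :
    ∃ f : groupCohomology.H2 (Rep.trivial ℤ (Multiplicative π) (AddCircle (1 : ℚ))) →+
      ((π ⊗[ℤ] π) →+ AddCircle (1 : ℚ)), Function.Injective f :=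
  stmt5_general π
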